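/- Let H_AB = H_A ⊗ H_B and let ρ_AB be a full-rank state and σ_A, σ_B full-rank states on H_A, H_B. Then the conditional relative entropy by expectations is semi-superadditive: D^E_A(ρ_AB‖σ_A ⊗ σ_B) = D(ρ_AB‖σ_A ⊗ ρ_B) ≥ D(ρ_A‖σ_A). -/

import Mathlib

open Matrix
open scoped Kronecker ComplexOrder

noncomputable section

/-- Apply a scalar function to a Hermitian matrix via its spectral decomposition
(junk value `0` if the matrix is not Hermitian). -/
def herFun {n : Type*} [Fintype n] [DecidableEq n] (f : ℝ → ℂ) (M : Matrix n n ℂ) :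
    Matrix n n ℂ :=
  if hM : M.IsHermitian then
    (hM.eigenvectorUnitary : Matrix n n ℂ) *
      Matrix.diagonal (fun i => f (hM.eigenvalues i)) *
      star (hM.eigenvectorUnitary : Matrix n n ℂ)
  else 0

/-- Matrix logarithm (of a positive definite Hermitian matrix). -/
def matLog {n : Type*} [Fintype n] [DecidableEq n] (M : Matrix n n ℂ) : Matrix n n ℂ :=
  herFun (fun x => (Real.log x : ℂ)) M

/-- Real powers of a positive (semi)definite matrix. -/
def matRpow {n : Type*} [Fintype n] [DecidableEq n] (M : Matrix n n ℂ) (r : ℝ) :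
    Matrix n n ℂ :=
  herFun (fun x => ((x ^ r : ℝ) : ℂ)) M

/-- Complex powers of a positive definite matrix. -/
def matCpow {n : Type*} [Fintype n] [DecidableEq n] (M : Matrix n n ℂ) (z : ℂ) :
    Matrix n n ℂ :=
  herFun (fun x => (x : ℂ) ^ z) M

/-- Matrix exponential of a Hermitian matrix. -/
def matExp {n : Type*} [Fintype n] [DecidableEq n] (M : Matrix n n ℂ) : Matrix n n ℂ :=
  herFun (fun x => (Real.exp x : ℂ)) M

/-- Quantum relative entropy `D(ρ‖σ) = Tr[ρ (log ρ − log σ)]`. -/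
def relEnt {n : Type*} [Fintype n] [DecidableEq n] (ρ σ : Matrix n n ℂ) : ℝ :=
  ((ρ * (matLog ρ - matLog σ)).trace).re

/-- Von Neumann entropy `S(ρ) = −Tr[ρ log ρ]`. -/
def vN {n : Type*} [Fintype n] [DecidableEq n] (ρ : Matrix n n ℂ) : ℝ :=
  -((ρ * matLog ρ).trace).re

/-- Operator norm (`‖·‖_∞`, the L2→L2 norm) of a matrix. -/
def opNorm {n : Type*} [Fintype n] [DecidableEq n] (M : Matrix n n ℂ) : ℝ :=
  ‖Matrix.toEuclideanCLM (𝕜 := ℂ) M‖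

/-- Partial trace over the first tensor factor. -/
def ptA {A B : Type*} [Fintype A] [Fintype B] (ρ : Matrix (A × B) (A × B) ℂ) :
    Matrix B B ℂ :=
  Matrix.of fun b b' => ∑ a, ρ (a, b) (a, b')

/-- Partial trace over the second tensor factor. -/
def ptB {A B : Type*} [Fintype A] [Fintype B] (ρ : Matrix (A × B) (A × B) ℂ) :
    Matrix A A ℂ :=
  Matrix.of fun a a' => ∑ b, ρ (a, b) (a', b)

/-- The Petz recovery map of `Tr_A` with respect to `σ`:
`E*_A(ρ) = σ^{1/2} (𝟙_A ⊗ σ_B^{-1/2} ρ_B σ_B^{-1/2}) σ^{1/2}`. -/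
def petzA {A B : Type*} [Fintype A] [Fintype B] [DecidableEq A] [DecidableEq B]
    (σ ρ : Matrix (A × B) (A × B) ℂ) : Matrix (A × B) (A × B) ℂ :=
  matRpow σ (1/2) *
    ((1 : Matrix A A ℂ) ⊗ₖ (matRpow (ptA σ) (-(1/2)) * ptA ρ * matRpow (ptA σ) (-(1/2)))) *
    matRpow σ (1/2)

/-- The Petz recovery map of `Tr_B` with respect to `σ`. -/
def petzB {A B : Type*} [Fintype A] [Fintype B] [DecidableEq A] [DecidableEq B]
    (σ ρ : Matrix (A × B) (A × B) ℂ) : Matrix (A × B) (A × B) ℂ :=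
  matRpow σ (1/2) *
    ((matRpow (ptB σ) (-(1/2)) * ptB ρ * matRpow (ptB σ) (-(1/2))) ⊗ₖ (1 : Matrix B B ℂ)) *
    matRpow σ (1/2)

/-- Mutual information of a bipartite state. -/
def mutualInfo {A B : Type*} [Fintype A] [Fintype B] [DecidableEq A] [DecidableEq B]
    (ρ : Matrix (A × B) (A × B) ℂ) : ℝ :=
  relEnt ρ (ptB ρ ⊗ₖ ptA ρ)


section AuxProofs

open Polynomial

variable {n : Type*} [Fintype n] [DecidableEq n]

/-- Conjugation by a unitary matrix as an algebra hom. -/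
def conjAlgHom {W : Matrix n n ℂ} (hW : W ∈ Matrix.unitaryGroup n ℂ) :
    Matrix n n ℂ →ₐ[ℂ] Matrix n n ℂ where
  toFun X := W * X * star W
  map_one' := by
    simpa using Matrix.mem_unitaryGroup_iff.mp hW
  map_mul' X Y := by
    have h2 : star W * W = 1 := Matrix.mem_unitaryGroup_iff'.mp hW
    calc W * (X * Y) * star W = (W * X) * (star W * W) * (Y * star W) := by
          rw [h2]; noncomm_ring
      _ = W * X * star W * (W * Y * star W) := by noncomm_ring
  map_zero' := by simp
  map_add' X Y := by noncomm_ring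
  commutes' c := by
    simp only [Algebra.algebraMap_eq_smul_one, smul_mul_assoc, mul_one, mul_smul_comm]
    rw [Matrix.mem_unitaryGroup_iff.mp hW]

lemma aeval_diagonal (P : ℂ[X]) (c : n → ℂ) :
    aeval (Matrix.diagonal c) P = Matrix.diagonal (fun i => P.eval (c i)) := by
  have h : (aeval c P : n → ℂ) = fun i => P.eval (c i) := by
    funext i
    have := aeval_algHom_apply (Pi.evalAlgHom ℂ (fun _ : n => ℂ) i) c P
    simp only [Pi.evalAlgHom_apply] at this
    rw [← this, Polynomial.aeval_def, Polynomial.eval, Algebra.algebraMap_self]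
  rw [show Matrix.diagonal c = Matrix.diagonalAlgHom (R := ℂ) (n := n) (α := ℂ) c from rfl,
    aeval_algHom_apply, Matrix.diagonalAlgHom_apply, h]

lemma aeval_conj (P : ℂ[X]) {W : Matrix n n ℂ} (hW : W ∈ Matrix.unitaryGroup n ℂ)
    (D : Matrix n n ℂ) :
    aeval (W * D * star W) P = W * aeval D P * star W :=
  aeval_algHom_apply (conjAlgHom hW) D P


lemma det_decomp {W : Matrix n n ℂ} (hW : W ∈ Matrix.unitaryGroup n ℂ)
    (c : n → ℂ) (z : ℂ) :
    Matrix.det (z • 1 - W * Matrix.diagonal c * star W) = ∏ j, (z - c j) := by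
  have h1 : z • (1 : Matrix n n ℂ) = W * (z • 1) * star W := by
    rw [mul_smul_comm, smul_mul_assoc, mul_one, Matrix.mem_unitaryGroup_iff.mp hW]
  rw [h1, ← Matrix.sub_mul, ← Matrix.mul_sub, Matrix.det_mul, Matrix.det_mul,
    mul_comm (Matrix.det W), mul_assoc, ← Matrix.det_mul,
    Matrix.mem_unitaryGroup_iff.mp hW, Matrix.det_one, mul_one,
    Matrix.smul_one_eq_diagonal, Matrix.diagonal_sub, Matrix.det_diagonal]

lemma spectral_decomp {M : Matrix n n ℂ} (hM : M.IsHermitian) :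
    M = (hM.eigenvectorUnitary : Matrix n n ℂ) *
      Matrix.diagonal (fun i => ((hM.eigenvalues i : ℝ) : ℂ)) *
      star (hM.eigenvectorUnitary : Matrix n n ℂ) := hM.spectral_theorem

/-- Well-definedness of `herFun` : it can be computed from any unitary diagonalization. -/
lemma herFun_decomp (f : ℝ → ℂ) {M W : Matrix n n ℂ} {d : n → ℝ}
    (hW : W ∈ Matrix.unitaryGroup n ℂ)
    (hM : M = W * Matrix.diagonal (fun i => ((d i : ℝ) : ℂ)) * star W) :
    herFun f M = W * Matrix.diagonal (fun i => f (d i)) * star W := by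
  have hHerm : M.IsHermitian := by
    rw [hM]
    have hd : (Matrix.diagonal (fun i => ((d i : ℝ) : ℂ))).IsHermitian := by
      apply Matrix.isHermitian_diagonal_of_self_adjoint
      funext i
      simp [_root_.IsSelfAdjoint, Complex.conj_ofReal]
    simpa [Matrix.star_eq_conjTranspose] using
      Matrix.isHermitian_mul_mul_conjTranspose W hd
  rcases isEmpty_or_nonempty n with h | h
  · ext i j; exact (h.false i).elim
  -- every canonical eigenvalue is one of the `d j`
  have key : ∀ i, ∃ j, hHerm.eigenvalues i = d j := by
    intro i
    have h2 : (∏ j, (((hHerm.eigenvalues i : ℝ) : ℂ) - hHerm.eigenvalues j)) = 0 :=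
      Finset.prod_eq_zero (Finset.mem_univ i) (by simp)
    have h3 := det_decomp hW (fun j => ((d j : ℝ) : ℂ)) ((hHerm.eigenvalues i : ℝ) : ℂ)
    have h4 := det_decomp (hHerm.eigenvectorUnitary).2
      (fun j => ((hHerm.eigenvalues j : ℝ) : ℂ)) ((hHerm.eigenvalues i : ℝ) : ℂ)
    rw [← hM] at h3
    rw [← spectral_decomp hHerm] at h4
    rw [h4, h2] at h3
    obtain ⟨j, -, hj⟩ := Finset.prod_eq_zero_iff.mp h3.symm
    exact ⟨j, Complex.ofReal_inj.mp (sub_eq_zero.mp hj)⟩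
  set s : Finset ℝ := Finset.image d Finset.univ with hs_def
  have hinj : Set.InjOn (fun x : ℝ => (x : ℂ)) s := fun a _ b _ hab =>
    Complex.ofReal_inj.mp hab
  set P : Polynomial ℂ := Lagrange.interpolate s (fun x : ℝ => (x : ℂ)) f with hP_def
  have hP : ∀ x ∈ s, P.eval ((x : ℝ) : ℂ) = f x := fun x hx =>
    Lagrange.eval_interpolate_at_node f hinj hx
  have e1 : aeval M P = W * Matrix.diagonal (fun j => f (d j)) * star W := by
    rw [hM, aeval_conj P hW, aeval_diagonal]
    have : (fun i => P.eval ((d i : ℝ) : ℂ)) = fun j => f (d j) :=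
      funext fun j => hP (d j) (Finset.mem_image_of_mem d (Finset.mem_univ j))
    rw [this]
  have e2 : aeval M P = (hHerm.eigenvectorUnitary : Matrix n n ℂ) *
      Matrix.diagonal (fun i => f (hHerm.eigenvalues i)) *
      star (hHerm.eigenvectorUnitary : Matrix n n ℂ) := by
    conv_lhs => rw [spectral_decomp hHerm]
    rw [aeval_conj P (hHerm.eigenvectorUnitary).2, aeval_diagonal]
    have : (fun i => P.eval ((hHerm.eigenvalues i : ℝ) : ℂ)) =
        fun i => f (hHerm.eigenvalues i) := by
      funext i
      obtain ⟨j, hj⟩ := key i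
      rw [hP _ (by rw [hj]; exact Finset.mem_image_of_mem d (Finset.mem_univ j))]
    rw [this]
  rw [herFun, dif_pos hHerm, ← e2, e1]


lemma herFun_eq {M : Matrix n n ℂ} (hM : M.IsHermitian) (f : ℝ → ℂ) :
    herFun f M = (hM.eigenvectorUnitary : Matrix n n ℂ) *
      Matrix.diagonal (fun i => f (hM.eigenvalues i)) *
      star (hM.eigenvectorUnitary : Matrix n n ℂ) := by
  rw [herFun, dif_pos hM]

lemma mul_decomp {W : Matrix n n ℂ} (hW : W ∈ Matrix.unitaryGroup n ℂ)
    (D1 D2 : Matrix n n ℂ) :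
    (W * D1 * star W) * (W * D2 * star W) = W * (D1 * D2) * star W := by
  have h2 : star W * W = 1 := Matrix.mem_unitaryGroup_iff'.mp hW
  calc (W * D1 * star W) * (W * D2 * star W)
      = W * D1 * (star W * W) * (D2 * star W) := by noncomm_ring
    _ = W * (D1 * D2) * star W := by rw [h2]; noncomm_ring

lemma herFun_mul_herFun {M : Matrix n n ℂ} (hM : M.IsHermitian) (f g : ℝ → ℂ) :
    herFun f M * herFun g M = herFun (fun x => f x * g x) M := by
  rw [herFun_eq hM, herFun_eq hM, herFun_eq hM, mul_decomp hM.eigenvectorUnitary.2,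
    Matrix.diagonal_mul_diagonal]

lemma herFun_congr {M : Matrix n n ℂ} (hM : M.IsHermitian) {f g : ℝ → ℂ}
    (h : ∀ i, f (hM.eigenvalues i) = g (hM.eigenvalues i)) :
    herFun f M = herFun g M := by
  have he : (fun i => f (hM.eigenvalues i)) = fun i => g (hM.eigenvalues i) :=
    _root_.funext h
  rw [herFun_eq hM, herFun_eq hM, he]

lemma herFun_id {M : Matrix n n ℂ} (hM : M.IsHermitian) :
    herFun (fun x => (x : ℂ)) M = M := by
  rw [herFun_eq hM]; exact (spectral_decomp hM).symm

lemma herFun_one {M : Matrix n n ℂ} (hM : M.IsHermitian) :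
    herFun (fun _ => (1 : ℂ)) M = 1 := by
  rw [herFun_eq hM, Matrix.diagonal_one, mul_one, Matrix.mem_unitaryGroup_iff.mp
    hM.eigenvectorUnitary.2]

lemma trace_decomp {W : Matrix n n ℂ} (hW : W ∈ Matrix.unitaryGroup n ℂ)
    (D : Matrix n n ℂ) : (W * D * star W).trace = D.trace := by
  rw [Matrix.mul_assoc, Matrix.trace_mul_comm, Matrix.mul_assoc,
    Matrix.mem_unitaryGroup_iff'.mp hW, Matrix.mul_one]

lemma posDef_decomp {M W : Matrix n n ℂ} {d : n → ℝ}
    (hW : W ∈ Matrix.unitaryGroup n ℂ) (hd : ∀ i, 0 < d i)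
    (hM : M = W * Matrix.diagonal (fun i => ((d i : ℝ) : ℂ)) * star W) :
    M.PosDef := by
  have hdiag : (Matrix.diagonal (fun i => ((d i : ℝ) : ℂ))).PosDef :=
    Matrix.PosDef.diagonal fun i => Complex.zero_lt_real.mpr (hd i)
  have hHerm : M.IsHermitian := by
    rw [hM]
    simpa [Matrix.star_eq_conjTranspose] using
      Matrix.isHermitian_mul_mul_conjTranspose W hdiag.1
  refine Matrix.PosDef.of_dotProduct_mulVec_pos hHerm fun x hx => ?_
  have hy : star W *ᵥ x ≠ 0 := by
    intro h0
    apply hx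
    have : (W * star W) *ᵥ x = W *ᵥ (star W *ᵥ x) := by rw [← Matrix.mulVec_mulVec]
    rw [Matrix.mem_unitaryGroup_iff.mp hW, Matrix.one_mulVec, h0, Matrix.mulVec_zero] at this
    exact this
  have key := hdiag.dotProduct_mulVec_pos hy
  have : star x ⬝ᵥ M *ᵥ x =
      star (star W *ᵥ x) ⬝ᵥ (Matrix.diagonal (fun i => ((d i : ℝ) : ℂ))) *ᵥ (star W *ᵥ x) := by
    rw [hM, ← Matrix.mulVec_mulVec, ← Matrix.mulVec_mulVec, Matrix.star_mulVec,
      Matrix.dotProduct_mulVec (star x), Matrix.star_eq_conjTranspose,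
      Matrix.conjTranspose_conjTranspose, ← Matrix.dotProduct_mulVec]
  rw [this]
  exact key



section KronAux

variable {A B : Type*} [Fintype A] [Fintype B] [DecidableEq A] [DecidableEq B]

lemma star_kron (X : Matrix A A ℂ) (Y : Matrix B B ℂ) :
    star (X ⊗ₖ Y) = star X ⊗ₖ star Y := by
  ext p q
  simp [Matrix.star_eq_conjTranspose, Matrix.conjTranspose_apply, Matrix.kroneckerMap_apply,
    star_mul']

lemma kron_mem_unitary {U : Matrix A A ℂ} {V : Matrix B B ℂ}
    (hU : U ∈ Matrix.unitaryGroup A ℂ) (hV : V ∈ Matrix.unitaryGroup B ℂ) :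
    U ⊗ₖ V ∈ Matrix.unitaryGroup (A × B) ℂ := by
  rw [Matrix.mem_unitaryGroup_iff, star_kron, ← Matrix.mul_kronecker_mul,
    Matrix.mem_unitaryGroup_iff.mp hU, Matrix.mem_unitaryGroup_iff.mp hV,
    Matrix.one_kronecker_one]

lemma kron_decomp {X : Matrix A A ℂ} {Y : Matrix B B ℂ}
    (hX : X.IsHermitian) (hY : Y.IsHermitian) :
    X ⊗ₖ Y = ((hX.eigenvectorUnitary : Matrix A A ℂ) ⊗ₖ (hY.eigenvectorUnitary : Matrix B B ℂ)) *
      Matrix.diagonal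
        (fun p : A × B => (((hX.eigenvalues p.1 * hY.eigenvalues p.2 : ℝ)) : ℂ)) *
      star ((hX.eigenvectorUnitary : Matrix A A ℂ) ⊗ₖ (hY.eigenvectorUnitary : Matrix B B ℂ)) := by
  conv_lhs => rw [spectral_decomp hX, spectral_decomp hY]
  rw [Matrix.mul_kronecker_mul, Matrix.mul_kronecker_mul, star_kron,
    Matrix.diagonal_kronecker_diagonal]
  simp [Complex.ofReal_mul]

lemma herFun_kron (f : ℝ → ℂ) {X : Matrix A A ℂ} {Y : Matrix B B ℂ}
    (hX : X.IsHermitian) (hY : Y.IsHermitian) :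
    herFun f (X ⊗ₖ Y) =
      ((hX.eigenvectorUnitary : Matrix A A ℂ) ⊗ₖ (hY.eigenvectorUnitary : Matrix B B ℂ)) *
      Matrix.diagonal (fun p : A × B => f (hX.eigenvalues p.1 * hY.eigenvalues p.2)) *
      star ((hX.eigenvectorUnitary : Matrix A A ℂ) ⊗ₖ (hY.eigenvectorUnitary : Matrix B B ℂ)) :=
  herFun_decomp f (kron_mem_unitary hX.eigenvectorUnitary.2 hY.eigenvectorUnitary.2)
    (kron_decomp hX hY)

lemma matLog_kron {X : Matrix A A ℂ} {Y : Matrix B B ℂ} (hX : X.PosDef) (hY : Y.PosDef) :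
    matLog (X ⊗ₖ Y) = matLog X ⊗ₖ (1 : Matrix B B ℂ) + (1 : Matrix A A ℂ) ⊗ₖ matLog Y := by
  rw [matLog, herFun_kron _ hX.1 hY.1]
  have hdiag : (Matrix.diagonal
      (fun p : A × B => ((Real.log (hX.1.eigenvalues p.1 * hY.1.eigenvalues p.2) : ℝ) : ℂ))) =
      Matrix.diagonal (fun i : A => ((Real.log (hX.1.eigenvalues i) : ℝ) : ℂ)) ⊗ₖ
        (1 : Matrix B B ℂ) +
      (1 : Matrix A A ℂ) ⊗ₖ
        Matrix.diagonal (fun j : B => ((Real.log (hY.1.eigenvalues j) : ℝ) : ℂ)) := by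
    rw [← Matrix.diagonal_one, ← Matrix.diagonal_one, Matrix.diagonal_kronecker_diagonal,
      Matrix.diagonal_kronecker_diagonal, Matrix.diagonal_add]
    have : (fun p : A × B => ((Real.log (hX.1.eigenvalues p.1 * hY.1.eigenvalues p.2) : ℝ) : ℂ)) =
        fun p : A × B => ((Real.log (hX.1.eigenvalues p.1) : ℝ) : ℂ) * 1 +
          1 * ((Real.log (hY.1.eigenvalues p.2) : ℝ) : ℂ) := by
      funext p
      rw [Real.log_mul (hX.eigenvalues_pos p.1).ne' (hY.eigenvalues_pos p.2).ne']
      push_cast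
      ring
    rw [this]
  rw [hdiag, Matrix.mul_add, Matrix.add_mul]
  congr 1
  · rw [star_kron, Matrix.mul_assoc, ← Matrix.mul_kronecker_mul, ← Matrix.mul_kronecker_mul,
      Matrix.one_mul, Matrix.mem_unitaryGroup_iff.mp hY.1.eigenvectorUnitary.2,
      matLog, herFun_eq hX.1, Matrix.mul_assoc]
  · rw [star_kron, Matrix.mul_assoc, ← Matrix.mul_kronecker_mul, ← Matrix.mul_kronecker_mul,
      Matrix.one_mul, Matrix.mem_unitaryGroup_iff.mp hX.1.eigenvectorUnitary.2,
      matLog, herFun_eq hY.1, Matrix.mul_assoc]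

lemma matRpow_kron {X : Matrix A A ℂ} {Y : Matrix B B ℂ} (hX : X.PosDef) (hY : Y.PosDef)
    (r : ℝ) : matRpow (X ⊗ₖ Y) r = matRpow X r ⊗ₖ matRpow Y r := by
  rw [matRpow, herFun_kron _ hX.1 hY.1, matRpow, matRpow, herFun_eq hX.1, herFun_eq hY.1,
    Matrix.mul_kronecker_mul, Matrix.mul_kronecker_mul, ← star_kron]
  congr 2
  rw [Matrix.diagonal_kronecker_diagonal]
  have : (fun p : A × B => (((hX.1.eigenvalues p.1 * hY.1.eigenvalues p.2) ^ r : ℝ) : ℂ)) =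
      fun p : A × B => ((hX.1.eigenvalues p.1 ^ r : ℝ) : ℂ) *
        ((hY.1.eigenvalues p.2 ^ r : ℝ) : ℂ) := by
    funext p
    rw [Real.mul_rpow (hX.eigenvalues_pos p.1).le (hY.eigenvalues_pos p.2).le]
    push_cast
    ring
  rw [this]

lemma ptA_kron (X : Matrix A A ℂ) (Y : Matrix B B ℂ) :
    ptA (X ⊗ₖ Y) = X.trace • Y := by
  ext b b'
  simp [ptA, Matrix.trace, Matrix.kroneckerMap_apply, Finset.sum_mul, Matrix.diag]

lemma ptA_trace (ρ : Matrix (A × B) (A × B) ℂ) : (ptA ρ).trace = ρ.trace := by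
  rw [Matrix.trace, Matrix.trace]
  simp only [Matrix.diag, ptA, Matrix.of_apply, Fintype.sum_prod_type]
  exact Finset.sum_comm

lemma ptB_trace (ρ : Matrix (A × B) (A × B) ℂ) : (ptB ρ).trace = ρ.trace := by
  rw [Matrix.trace, Matrix.trace]
  simp only [Matrix.diag, ptB, Matrix.of_apply, Fintype.sum_prod_type]

lemma trace_mul_kron_one (ρ : Matrix (A × B) (A × B) ℂ) (M : Matrix A A ℂ) :
    (ρ * (M ⊗ₖ (1 : Matrix B B ℂ))).trace = (ptB ρ * M).trace := by
  calc (ρ * (M ⊗ₖ (1 : Matrix B B ℂ))).trace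
      = ∑ a : A, ∑ b : B, ∑ a' : A, ρ (a, b) (a', b) * M a' a := by
        simp [Matrix.trace, Matrix.diag, Matrix.mul_apply, Fintype.sum_prod_type,
          Matrix.kroneckerMap_apply, Matrix.one_apply, mul_ite, mul_one, mul_zero,
          Finset.sum_ite_eq', mul_comm]
    _ = ∑ a : A, ∑ a' : A, (∑ b : B, ρ (a, b) (a', b)) * M a' a := by
        refine Finset.sum_congr rfl fun a _ => ?_
        rw [Finset.sum_comm]
        simp [Finset.sum_mul]
    _ = (ptB ρ * M).trace := by
        simp [Matrix.trace, Matrix.diag, Matrix.mul_apply, ptB]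

lemma trace_mul_one_kron (ρ : Matrix (A × B) (A × B) ℂ) (N : Matrix B B ℂ) :
    (ρ * ((1 : Matrix A A ℂ) ⊗ₖ N)).trace = (ptA ρ * N).trace := by
  calc (ρ * ((1 : Matrix A A ℂ) ⊗ₖ N)).trace
      = ∑ a : A, ∑ b : B, ∑ b' : B, ρ (a, b) (a, b') * N b' b := by
        simp [Matrix.trace, Matrix.diag, Matrix.mul_apply, Fintype.sum_prod_type,
          Matrix.kroneckerMap_apply, Matrix.one_apply, ite_mul, one_mul, zero_mul,
          mul_ite, mul_one, mul_zero, Finset.sum_ite_eq', mul_comm]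
    _ = ∑ b : B, ∑ b' : B, (∑ a : A, ρ (a, b) (a, b')) * N b' b := by
        rw [Finset.sum_comm]
        refine Finset.sum_congr rfl fun b _ => ?_
        rw [Finset.sum_comm]
        simp [Finset.sum_mul]
    _ = (ptA ρ * N).trace := by
        simp [Matrix.trace, Matrix.diag, Matrix.mul_apply, ptA]

lemma ptA_isHermitian {ρ : Matrix (A × B) (A × B) ℂ} (hρ : ρ.IsHermitian) :
    (ptA ρ).IsHermitian := by
  ext b b'
  simp only [Matrix.conjTranspose_apply, ptA, Matrix.of_apply, star_sum]
  refine Finset.sum_congr rfl fun a _ => ?_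
  exact congrFun (congrFun hρ (a, b)) (a, b')

lemma ptB_isHermitian {ρ : Matrix (A × B) (A × B) ℂ} (hρ : ρ.IsHermitian) :
    (ptB ρ).IsHermitian := by
  ext a a'
  simp only [Matrix.conjTranspose_apply, ptB, Matrix.of_apply, star_sum]
  refine Finset.sum_congr rfl fun b _ => ?_
  exact congrFun (congrFun hρ (a, b)) (a', b)

lemma ptA_posDef [Nonempty A] {ρ : Matrix (A × B) (A × B) ℂ} (hρ : ρ.PosDef) :
    (ptA ρ).PosDef := by
  refine Matrix.PosDef.of_dotProduct_mulVec_pos (ptA_isHermitian hρ.1) fun x hx => ?_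
  have key : ∀ a : A,
      (star (fun p : A × B => if p.1 = a then x p.2 else 0)) ⬝ᵥ
        ρ *ᵥ (fun p : A × B => if p.1 = a then x p.2 else 0) =
      ∑ b : B, ∑ b' : B, star (x b) * (ρ (a, b) (a, b') * x b') := by
    intro a
    simp only [dotProduct, Matrix.mulVec, dotProduct, Pi.star_apply,
      Fintype.sum_prod_type, apply_ite star, star_zero, mul_ite, ite_mul, zero_mul, mul_zero,
      Finset.sum_ite_irrel, Finset.sum_const_zero, Finset.sum_ite_eq', Finset.mem_univ, if_true,
      Finset.mul_sum, Finset.sum_mul, mul_assoc]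
  have hsum : star x ⬝ᵥ (ptA ρ) *ᵥ x =
      ∑ a : A, (star (fun p : A × B => if p.1 = a then x p.2 else 0)) ⬝ᵥ
        ρ *ᵥ (fun p : A × B => if p.1 = a then x p.2 else 0) := by
    simp only [key]
    calc star x ⬝ᵥ (ptA ρ) *ᵥ x
        = ∑ b : B, ∑ b' : B, ∑ a : A, star (x b) * (ρ (a, b) (a, b') * x b') := by
          simp only [dotProduct, Matrix.mulVec, dotProduct, ptA,
            Matrix.of_apply, Pi.star_apply, Finset.mul_sum, Finset.sum_mul, mul_assoc]
      _ = ∑ b : B, ∑ a : A, ∑ b' : B, star (x b) * (ρ (a, b) (a, b') * x b') := by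
          exact Finset.sum_congr rfl fun b _ => Finset.sum_comm
      _ = ∑ a : A, ∑ b : B, ∑ b' : B, star (x b) * (ρ (a, b) (a, b') * x b') :=
          Finset.sum_comm
  rw [hsum]
  obtain ⟨b0, hb0⟩ := Function.ne_iff.mp hx
  have a0 : A := Classical.arbitrary A
  refine Finset.sum_pos' (fun a _ => hρ.posSemidef.dotProduct_mulVec_nonneg _) ⟨a0, Finset.mem_univ a0, ?_⟩
  refine hρ.dotProduct_mulVec_pos fun h0 => hb0 ?_
  have := congrFun h0 (a0, b0)
  simpa using this

lemma ptB_posDef [Nonempty B] {ρ : Matrix (A × B) (A × B) ℂ} (hρ : ρ.PosDef) :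
    (ptB ρ).PosDef := by
  refine Matrix.PosDef.of_dotProduct_mulVec_pos (ptB_isHermitian hρ.1) fun x hx => ?_
  have key : ∀ b : B,
      (star (fun p : A × B => if p.2 = b then x p.1 else 0)) ⬝ᵥ
        ρ *ᵥ (fun p : A × B => if p.2 = b then x p.1 else 0) =
      ∑ a : A, ∑ a' : A, star (x a) * (ρ (a, b) (a', b) * x a') := by
    intro b
    simp only [dotProduct, Matrix.mulVec, dotProduct, Pi.star_apply,
      Fintype.sum_prod_type, apply_ite star, star_zero, mul_ite, ite_mul, zero_mul, mul_zero,
      Finset.sum_ite_irrel, Finset.sum_const_zero, Finset.sum_ite_eq', Finset.mem_univ, if_true,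
      Finset.mul_sum, Finset.sum_mul, mul_assoc]
  have hsum : star x ⬝ᵥ (ptB ρ) *ᵥ x =
      ∑ b : B, (star (fun p : A × B => if p.2 = b then x p.1 else 0)) ⬝ᵥ
        ρ *ᵥ (fun p : A × B => if p.2 = b then x p.1 else 0) := by
    simp only [key]
    calc star x ⬝ᵥ (ptB ρ) *ᵥ x
        = ∑ a : A, ∑ a' : A, ∑ b : B, star (x a) * (ρ (a, b) (a', b) * x a') := by
          simp only [dotProduct, Matrix.mulVec, dotProduct, ptB,
            Matrix.of_apply, Pi.star_apply, Finset.mul_sum, Finset.sum_mul, mul_assoc]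
      _ = ∑ a : A, ∑ b : B, ∑ a' : A, star (x a) * (ρ (a, b) (a', b) * x a') := by
          exact Finset.sum_congr rfl fun a _ => Finset.sum_comm
      _ = ∑ b : B, ∑ a : A, ∑ a' : A, star (x a) * (ρ (a, b) (a', b) * x a') :=
          Finset.sum_comm
  rw [hsum]
  obtain ⟨a0, ha0⟩ := Function.ne_iff.mp hx
  have b0 : B := Classical.arbitrary B
  refine Finset.sum_pos' (fun b _ => hρ.posSemidef.dotProduct_mulVec_nonneg _) ⟨b0, Finset.mem_univ b0, ?_⟩
  refine hρ.dotProduct_mulVec_pos fun h0 => ha0 ?_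
  have := congrFun h0 (a0, b0)
  simpa using this

end KronAux

lemma trace_mul_diagonal' (X : Matrix n n ℂ) (v : n → ℂ) :
    (X * Matrix.diagonal v).trace = ∑ j, X j j * v j := by
  simp [Matrix.trace, Matrix.diag, Matrix.mul_apply, Matrix.diagonal_apply, mul_ite, mul_zero,
    Finset.sum_ite_eq', Finset.mem_univ]

lemma conj_mul_self (z : ℂ) : star z * z = ((Complex.normSq z : ℝ) : ℂ) := by
  rw [Complex.star_def, mul_comm]
  exact Complex.mul_conj z

lemma trace_conj_diag_diag (W : Matrix n n ℂ) (dp dl : n → ℂ) :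
    (star W * Matrix.diagonal dp * (W * Matrix.diagonal dl)).trace
      = ∑ j, (∑ i, star (W i j) * (dp i * W i j)) * dl j := by
  rw [show star W * Matrix.diagonal dp * (W * Matrix.diagonal dl)
      = (star W * Matrix.diagonal dp * W) * Matrix.diagonal dl by noncomm_ring,
    trace_mul_diagonal']
  refine Finset.sum_congr rfl fun j _ => ?_
  congr 1
  simp only [Matrix.mul_apply, Matrix.diagonal_apply, mul_ite, mul_zero, ite_mul, zero_mul,
    Finset.sum_ite_eq', Finset.mem_univ, if_true, Finset.sum_mul,
    Matrix.star_eq_conjTranspose, Matrix.conjTranspose_apply]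
  exact Finset.sum_congr rfl fun i _ => by ring

lemma log_ineq {p q : ℝ} (hp : 0 < p) (hq : 0 < q) :
    p - q ≤ p * Real.log p - p * Real.log q := by
  have h := Real.log_le_sub_one_of_pos (div_pos hq hp)
  rw [Real.log_div hq.ne' hp.ne'] at h
  have h2 : p * (Real.log q - Real.log p) ≤ p * (q / p - 1) :=
    mul_le_mul_of_nonneg_left h hp.le
  have h3 : p * (q / p - 1) = q - p := by field_simp
  nlinarith [h2, h3]

/-- Klein's inequality : nonnegativity of the relative entropy. -/
lemma relEnt_nonneg {ρ τ : Matrix n n ℂ} (hρ : ρ.PosDef) (hτ : τ.PosDef)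
    (hρ1 : ρ.trace = 1) (hτ1 : τ.trace = 1) : 0 ≤ relEnt ρ τ := by
  set hp := hρ.1 with hp_def
  set hq := hτ.1 with hq_def
  set U : Matrix n n ℂ := (hp.eigenvectorUnitary : Matrix n n ℂ) with hU_def
  set V : Matrix n n ℂ := (hq.eigenvectorUnitary : Matrix n n ℂ) with hV_def
  set p : n → ℝ := hp.eigenvalues with hpe
  set q : n → ℝ := hq.eigenvalues with hqe
  set W : Matrix n n ℂ := star U * V with hW_def
  set w : n → n → ℝ := fun i j => Complex.normSq (W i j) with hw_def
  have hUU : U * star U = 1 := Matrix.mem_unitaryGroup_iff.mp hp.eigenvectorUnitary.2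
  have hUU' : star U * U = 1 := Matrix.mem_unitaryGroup_iff'.mp hp.eigenvectorUnitary.2
  have hVV : V * star V = 1 := Matrix.mem_unitaryGroup_iff.mp hq.eigenvectorUnitary.2
  have hVV' : star V * V = 1 := Matrix.mem_unitaryGroup_iff'.mp hq.eigenvectorUnitary.2
  have hWW : W * star W = 1 := by
    rw [hW_def, StarMul.star_mul, star_star]
    calc star U * V * (star V * U) = star U * (V * star V) * U := by noncomm_ring
      _ = 1 := by rw [hVV, Matrix.mul_one, hUU']
  have hWW' : star W * W = 1 := by
    rw [hW_def, StarMul.star_mul, star_star]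
    calc star V * U * (star U * V) = star V * (U * star U) * V := by noncomm_ring
      _ = 1 := by rw [hUU, Matrix.mul_one, hVV']
  have hppos : ∀ i, 0 < p i := hρ.eigenvalues_pos
  have hqpos : ∀ j, 0 < q j := hτ.eigenvalues_pos
  have hptr : ∑ i, p i = 1 := by
    have h := trace_decomp hp.eigenvectorUnitary.2
      (Matrix.diagonal (fun i => ((p i : ℝ) : ℂ)))
    rw [← spectral_decomp hp, hρ1, Matrix.trace_diagonal] at h
    have := congrArg Complex.re h.symm
    simpa [Complex.re_sum] using this
  have hqtr : ∑ j, q j = 1 := by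
    have h := trace_decomp hq.eigenvectorUnitary.2
      (Matrix.diagonal (fun i => ((q i : ℝ) : ℂ)))
    rw [← spectral_decomp hq, hτ1, Matrix.trace_diagonal] at h
    have := congrArg Complex.re h.symm
    simpa [Complex.re_sum] using this
  have hrow : ∀ i, ∑ j, w i j = 1 := by
    intro i
    have h := congrFun (congrFun hWW i) i
    simp only [Matrix.mul_apply, Matrix.one_apply_eq] at h
    have hterm : ∀ j, W i j * star W j i = ((w i j : ℝ) : ℂ) := fun j => by
      rw [Matrix.star_eq_conjTranspose, Matrix.conjTranspose_apply, hw_def, mul_comm]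
      exact conj_mul_self (W i j)
    rw [Finset.sum_congr rfl fun j _ => hterm j] at h
    have := congrArg Complex.re h
    simpa [Complex.re_sum] using this
  have hcol : ∀ j, ∑ i, w i j = 1 := by
    intro j
    have h := congrFun (congrFun hWW' j) j
    simp only [Matrix.mul_apply, Matrix.one_apply_eq] at h
    have hterm : ∀ i, star W j i * W i j = ((w i j : ℝ) : ℂ) := fun i => by
      rw [Matrix.star_eq_conjTranspose, Matrix.conjTranspose_apply, hw_def]
      exact conj_mul_self (W i j)
    rw [Finset.sum_congr rfl fun i _ => hterm i] at h
    have := congrArg Complex.re h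
    simpa [Complex.re_sum] using this
  -- trace terms
  have t1 : (ρ * matLog ρ).trace = ∑ i, ((p i * Real.log (p i) : ℝ) : ℂ) := by
    have h1 : ρ * matLog ρ = herFun (fun x => (x : ℂ) * (Real.log x : ℂ)) ρ := by
      rw [← herFun_mul_herFun hp (fun x => (x : ℂ)) (fun x => (Real.log x : ℂ)),
        herFun_id hp, matLog]
    rw [h1, herFun_eq hp, trace_decomp hp.eigenvectorUnitary.2, Matrix.trace_diagonal]
    simp [Complex.ofReal_mul, hpe]
  have t2 : (ρ * matLog τ).trace
      = ∑ j, ∑ i, ((w i j * (p i * Real.log (q j)) : ℝ) : ℂ) := by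
    have h1 : ρ * matLog τ = ρ * (V * Matrix.diagonal
        (fun j => ((Real.log (q j) : ℝ) : ℂ)) * star V) := by
      rw [matLog, herFun_eq hq]
    rw [h1, show ρ * (V * Matrix.diagonal (fun j => ((Real.log (q j) : ℝ) : ℂ)) * star V)
        = (ρ * (V * Matrix.diagonal (fun j => ((Real.log (q j) : ℝ) : ℂ)))) * star V
        by noncomm_ring, Matrix.trace_mul_comm]
    have h3 : star V * (ρ * (V * Matrix.diagonal (fun j => ((Real.log (q j) : ℝ) : ℂ))))
        = star W * Matrix.diagonal (fun i => ((p i : ℝ) : ℂ)) *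
          (W * Matrix.diagonal (fun j => ((Real.log (q j) : ℝ) : ℂ))) := by
      conv_lhs => rw [spectral_decomp hp]
      rw [hW_def, StarMul.star_mul, star_star]
      noncomm_ring
    rw [h3, trace_conj_diag_diag]
    refine Finset.sum_congr rfl fun j _ => ?_
    rw [Finset.sum_mul]
    refine Finset.sum_congr rfl fun i _ => ?_
    have h4 : star (W i j) * (((p i : ℝ) : ℂ) * W i j)
        = ((w i j : ℝ) : ℂ) * ((p i : ℝ) : ℂ) := by
      calc star (W i j) * (((p i : ℝ) : ℂ) * W i j)
          = (star (W i j) * W i j) * ((p i : ℝ) : ℂ) := by ring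
        _ = ((w i j : ℝ) : ℂ) * ((p i : ℝ) : ℂ) := by rw [conj_mul_self, hw_def]
    rw [h4]
    push_cast
    ring
  have hrel : relEnt ρ τ = (∑ i, p i * Real.log (p i))
      - ∑ j, ∑ i, w i j * (p i * Real.log (q j)) := by
    rw [relEnt, Matrix.mul_sub, Matrix.trace_sub, t1, t2, Complex.sub_re]
    simp [Complex.re_sum]
  have key : ∀ i j, w i j * (p i - q j)
      ≤ w i j * (p i * Real.log (p i) - p i * Real.log (q j)) :=
    fun i j => mul_le_mul_of_nonneg_left (log_ineq (hppos i) (hqpos j))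
      (Complex.normSq_nonneg _)
  have big : (∑ i, ∑ j, w i j * (p i - q j))
      ≤ ∑ i, ∑ j, w i j * (p i * Real.log (p i) - p i * Real.log (q j)) :=
    Finset.sum_le_sum fun i _ => Finset.sum_le_sum fun j _ => key i j
  have hS0 : (∑ i, ∑ j, w i j * (p i - q j)) = 0 := by
    have ha : (∑ i, ∑ j, w i j * p i) = 1 := by
      calc (∑ i, ∑ j, w i j * p i) = ∑ i, (∑ j, w i j) * p i := by
            simp [Finset.sum_mul]
        _ = ∑ i, p i := Finset.sum_congr rfl fun i _ => by rw [hrow i, one_mul]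
        _ = 1 := hptr
    have hb : (∑ i, ∑ j, w i j * q j) = 1 := by
      calc (∑ i, ∑ j, w i j * q j) = ∑ j, ∑ i, w i j * q j := Finset.sum_comm
        _ = ∑ j, (∑ i, w i j) * q j := by simp [Finset.sum_mul]
        _ = ∑ j, q j := Finset.sum_congr rfl fun j _ => by rw [hcol j, one_mul]
        _ = 1 := hqtr
    simp only [mul_sub, Finset.sum_sub_distrib]
    rw [ha, hb, sub_self]
  have hS1 : (∑ i, ∑ j, w i j * (p i * Real.log (p i) - p i * Real.log (q j)))
      = (∑ i, p i * Real.log (p i)) - ∑ j, ∑ i, w i j * (p i * Real.log (q j)) := by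
    simp only [mul_sub, Finset.sum_sub_distrib]
    refine congrArg₂ (· - ·) ?_ ?_
    · refine Finset.sum_congr rfl fun i _ => ?_
      rw [← Finset.sum_mul, hrow i, one_mul]
    · exact Finset.sum_comm
  rw [hrel, ← hS1]
  rw [hS0] at big
  exact big



section MainAux

variable {A B : Type*} [Fintype A] [Fintype B] [DecidableEq A] [DecidableEq B]

lemma matRpow_half_mul_half {X : Matrix A A ℂ} (hX : X.PosDef) :
    matRpow X (1/2) * matRpow X (1/2) = X := by
  rw [matRpow, herFun_mul_herFun hX.1]
  have h : ∀ i, ((hX.1.eigenvalues i ^ ((1:ℝ)/2) : ℝ) : ℂ) *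
      ((hX.1.eigenvalues i ^ ((1:ℝ)/2) : ℝ) : ℂ) = ((hX.1.eigenvalues i : ℝ) : ℂ) := by
    intro i
    rw [← Complex.ofReal_mul, ← Real.rpow_add (hX.eigenvalues_pos i)]
    norm_num
  rw [herFun_congr hX.1 h, herFun_id hX.1]

lemma matRpow_half_mul_neg_half {X : Matrix A A ℂ} (hX : X.PosDef) :
    matRpow X (1/2) * matRpow X (-(1/2)) = 1 := by
  rw [matRpow, matRpow, herFun_mul_herFun hX.1]
  have h : ∀ i, ((hX.1.eigenvalues i ^ ((1:ℝ)/2) : ℝ) : ℂ) *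
      ((hX.1.eigenvalues i ^ (-((1:ℝ)/2)) : ℝ) : ℂ) = 1 := by
    intro i
    rw [← Complex.ofReal_mul, ← Real.rpow_add (hX.eigenvalues_pos i)]
    norm_num
  rw [herFun_congr hX.1 (g := fun _ => (1 : ℂ)) h, herFun_one hX.1]

lemma matRpow_neg_half_mul_half {X : Matrix A A ℂ} (hX : X.PosDef) :
    matRpow X (-(1/2)) * matRpow X (1/2) = 1 := by
  rw [matRpow, matRpow, herFun_mul_herFun hX.1]
  have h : ∀ i, ((hX.1.eigenvalues i ^ (-((1:ℝ)/2)) : ℝ) : ℂ) *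
      ((hX.1.eigenvalues i ^ ((1:ℝ)/2) : ℝ) : ℂ) = 1 := by
    intro i
    rw [← Complex.ofReal_mul, ← Real.rpow_add (hX.eigenvalues_pos i)]
    norm_num
  rw [herFun_congr hX.1 (g := fun _ => (1 : ℂ)) h, herFun_one hX.1]

lemma petzA_kron {ρ : Matrix (A × B) (A × B) ℂ} {σA : Matrix A A ℂ} {σB : Matrix B B ℂ}
    (hσA : σA.PosDef) (hσB : σB.PosDef) (hσAtr : σA.trace = 1) :
    petzA (σA ⊗ₖ σB) ρ = σA ⊗ₖ ptA ρ := by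
  rw [petzA, show ptA (σA ⊗ₖ σB) = σB by rw [ptA_kron, hσAtr, one_smul],
    matRpow_kron hσA hσB, ← Matrix.mul_kronecker_mul, ← Matrix.mul_kronecker_mul]
  have h1 : matRpow σA (1/2) * 1 * matRpow σA (1/2) = σA := by
    rw [Matrix.mul_one, matRpow_half_mul_half hσA]
  have h2 : matRpow σB (1/2) * (matRpow σB (-(1/2)) * ptA ρ * matRpow σB (-(1/2))) *
      matRpow σB (1/2) = ptA ρ := by
    calc matRpow σB (1/2) * (matRpow σB (-(1/2)) * ptA ρ * matRpow σB (-(1/2))) *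
          matRpow σB (1/2)
        = (matRpow σB (1/2) * matRpow σB (-(1/2))) * ptA ρ *
            (matRpow σB (-(1/2)) * matRpow σB (1/2)) := by noncomm_ring
      _ = ptA ρ := by
          rw [matRpow_half_mul_neg_half hσB, matRpow_neg_half_mul_half hσB,
            Matrix.one_mul, Matrix.mul_one]
  rw [h1, h2]

lemma relEnt_kron_expand {ρ : Matrix (A × B) (A × B) ℂ} {X : Matrix A A ℂ}
    {Y : Matrix B B ℂ} (hX : X.PosDef) (hY : Y.PosDef) :
    relEnt ρ (X ⊗ₖ Y) = ((ρ * matLog ρ).trace).re - ((ptB ρ * matLog X).trace).re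
      - ((ptA ρ * matLog Y).trace).re := by
  rw [relEnt, Matrix.mul_sub, Matrix.trace_sub, Complex.sub_re, matLog_kron hX hY,
    Matrix.mul_add, Matrix.trace_add, Complex.add_re, trace_mul_kron_one,
    trace_mul_one_kron]
  ring


end MainAux

end AuxProofs

/-- Semi-superadditivity of the conditional relative entropy by expectations:
`D^E_A(ρ_AB‖σ_A ⊗ σ_B) = D(ρ_AB‖σ_A ⊗ ρ_B) ≥ D(ρ_A‖σ_A)`. -/
theorem condRelEntExp_semisuperadditive
    {A B : Type*} [Fintype A] [Fintype B] [DecidableEq A] [DecidableEq B]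
    (ρ : Matrix (A × B) (A × B) ℂ) (hρ : ρ.PosDef) (hρtr : ρ.trace = 1)
    (σA : Matrix A A ℂ) (σB : Matrix B B ℂ)
    (hσA : σA.PosDef) (hσAtr : σA.trace = 1)
    (hσB : σB.PosDef) (hσBtr : σB.trace = 1) :
    relEnt ρ (petzA (σA ⊗ₖ σB) ρ) = relEnt ρ (σA ⊗ₖ ptA ρ) ∧
    relEnt (ptB ρ) σA ≤ relEnt ρ (petzA (σA ⊗ₖ σB) ρ) := by
  have hABne : Nonempty (A × B) := by
    rcases isEmpty_or_nonempty (A × B) with h | h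
    · rw [Matrix.trace] at hρtr
      simp [Finset.univ_eq_empty] at hρtr
    · exact h
  have hAne : Nonempty A := ⟨(Classical.arbitrary (A × B)).1⟩
  have hBne : Nonempty B := ⟨(Classical.arbitrary (A × B)).2⟩
  have hpetz := petzA_kron (ρ := ρ) hσA hσB hσAtr
  have hρB : (ptA ρ).PosDef := ptA_posDef hρ
  have hρA : (ptB ρ).PosDef := ptB_posDef hρ
  have hρBtr : (ptA ρ).trace = 1 := by rw [ptA_trace, hρtr]
  have hρAtr : (ptB ρ).trace = 1 := by rw [ptB_trace, hρtr]
  refine ⟨by rw [hpetz], ?_⟩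
  rw [hpetz]
  have hkronPD : ((ptB ρ) ⊗ₖ (ptA ρ)).PosDef := by
    refine posDef_decomp
      (kron_mem_unitary hρA.1.eigenvectorUnitary.2 hρB.1.eigenvectorUnitary.2)
      (fun p => mul_pos (hρA.eigenvalues_pos p.1) (hρB.eigenvalues_pos p.2))
      (kron_decomp hρA.1 hρB.1)
  have hkrontr : ((ptB ρ) ⊗ₖ (ptA ρ)).trace = 1 := by
    rw [Matrix.trace_kronecker, hρAtr, hρBtr, one_mul]
  have hklein := relEnt_nonneg hρ hkronPD hρtr hkrontr
  have hexp1 := relEnt_kron_expand (ρ := ρ) hσA hρB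
  have hexp2 := relEnt_kron_expand (ρ := ρ) hρA hρB
  have hBexp : relEnt (ptB ρ) σA = ((ptB ρ * matLog (ptB ρ)).trace).re
      - ((ptB ρ * matLog σA).trace).re := by
    rw [relEnt, Matrix.mul_sub, Matrix.trace_sub, Complex.sub_re]
  -- relate the middle term of hexp2 with hBexp
  linarith [hklein, hexp1, hexp2, hBexp]


end
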